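/- Suppose P ≠ ∅. There is no strict linear order < on the underlying set of M such that the expanded structure (M, <) is ultrahomogeneous and the age of (M, <) has the Ramsey property. -/

import Mathlib

open FirstOrder Language Structure CategoryTheory

/-- The language `L₀` with a `2n`-ary relation symbol `E_n` for each `n ≥ 1`. -/
def L₀ : FirstOrder.Language where
  Functions := fun _ => Empty
  Relations := fun k => {n : ℕ // 0 < n ∧ k = n + n}

/-- The relation symbol `E_n`. -/
def Esymb (n : ℕ) (hn : 0 < n) : L₀.Relations (n + n) := ⟨n, hn, rfl⟩

/-- `E_n(x̄, ȳ)` in an `L₀`-structure. -/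
def ERel (M : Type*) [L₀.Structure M] (n : ℕ) (hn : 0 < n) (x y : Fin n → M) : Prop :=
  Structure.RelMap (Esymb n hn) (Fin.append x y)

/-- The defining conditions for membership in `K₀`: each `E_n` holds only on pairs of
injective `n`-tuples, is invariant under permuting the entries of each tuple separately,
and induces an equivalence relation on `n`-element subsets. -/
def IsK0Struct (C : Type*) [L₀.Structure C] : Prop :=
  ∀ (n : ℕ) (hn : 0 < n),
    (∀ x y : Fin n → C, ERel C n hn x y → Function.Injective x ∧ Function.Injective y) ∧
    (∀ (x y : Fin n → C) (σ τ : Equiv.Perm (Fin n)),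
        ERel C n hn x y → ERel C n hn (x ∘ σ) (y ∘ τ)) ∧
    (∀ x : Fin n → C, Function.Injective x → ERel C n hn x x) ∧
    (∀ x y : Fin n → C, ERel C n hn x y → ERel C n hn y x) ∧
    (∀ x y z : Fin n → C, ERel C n hn x y → ERel C n hn y z → ERel C n hn x z)

/-- The class `K₀` of finite `L₀`-structures as above. -/
def K₀ : Set (Bundled L₀.Structure) := {C | Finite C ∧ IsK0Struct C}

/-- A language with a single binary relation symbol (for a linear order). -/
def Lord : FirstOrder.Language where
  Functions := fun _ => Empty
  Relations := fun k => PLift (k = 2)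

/-- Interpret the binary relation symbol of `Lord` by a given relation `r`. -/
def ordStructure (M : Type*) (r : M → M → Prop) : Lord.Structure M where
  funMap := fun f => f.elim
  RelMap := fun {k} R v => r (v (Fin.cast R.down.symm 0)) (v (Fin.cast R.down.symm 1))

/-- The language of `L₀` together with one extra binary relation symbol `<`. -/
abbrev L₀lt : FirstOrder.Language := L₀.sum Lord

/-- The expansion of an `L₀`-structure by the binary relation `r`. -/
def expStr (M : Type*) [L₀.Structure M] (r : M → M → Prop) : L₀lt.Structure M :=
  @Language.sumStructure L₀ Lord M _ (ordStructure M r)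

/-- The Ramsey property for a class `K` of finite structures: for all `A, B ∈ K` and
`k ≥ 1` there is `C ∈ K` such that every `k`-coloring of the copies of `A` in `C` is
monochromatic on the copies of `A` inside some copy `B'` of `B` in `C`. -/
def RamseyProperty {L : FirstOrder.Language} (K : Set (Bundled L.Structure)) : Prop :=
  ∀ A B : Bundled L.Structure, A ∈ K → B ∈ K → ∀ k : ℕ, 0 < k →
    ∃ C : Bundled L.Structure, C ∈ K ∧
      ∀ χ : {S : L.Substructure C // Nonempty (S ≃[L] A)} → Fin k,
        ∃ B' : L.Substructure C, Nonempty (B' ≃[L] B) ∧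
          ∀ S T : {S : L.Substructure C // Nonempty (S ≃[L] A)},
            S.1 ≤ B' → T.1 ≤ B' → χ S = χ T

/-- The language `L_P`: a `2n`-ary symbol `E_n` for each `n ≥ 1` and a `2n`-ary symbol
`<_n` for each `n ∈ P`. -/
def LP (P : Set ℕ) : FirstOrder.Language where
  Functions := fun _ => Empty
  Relations := fun k => {n : ℕ // 0 < n ∧ k = n + n} ⊕ {n : ℕ // n ∈ P ∧ k = n + n}

/-- The symbol `E_n` of `L_P`. -/
def EsymbP (P : Set ℕ) (n : ℕ) (hn : 0 < n) : (LP P).Relations (n + n) :=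
  Sum.inl ⟨n, hn, rfl⟩

/-- The symbol `<_n` of `L_P`. -/
def LTsymbP (P : Set ℕ) (n : ℕ) (hn : n ∈ P) : (LP P).Relations (n + n) :=
  Sum.inr ⟨n, hn, rfl⟩

/-- `E_n(x̄, ȳ)` in an `L_P`-structure. -/
def ERelP (P : Set ℕ) (M : Type*) [i : (LP P).Structure M] (n : ℕ) (hn : 0 < n)
    (x y : Fin n → M) : Prop :=
  @Structure.RelMap (LP P) M i (n + n) (EsymbP P n hn) (Fin.append x y)

/-- `x̄ <_n ȳ` in an `L_P`-structure. -/
def LTRelP (P : Set ℕ) (M : Type*) [i : (LP P).Structure M] (n : ℕ) (hn : n ∈ P)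
    (x y : Fin n → M) : Prop :=
  @Structure.RelMap (LP P) M i (n + n) (LTsymbP P n hn) (Fin.append x y)

/-- The defining conditions for membership in `K_P`: the `{E_n}`-part satisfies the
`K₀`-conditions, and for `n ∈ P` the relation `<_n` holds only on injective tuples, is
`E_n`-invariant, and induces a strict linear order on `E_n`-classes. -/
def IsKPStruct (P : Set ℕ) (C : Type*) [(LP P).Structure C] : Prop :=
  (∀ (n : ℕ) (hn : 0 < n),
    (∀ x y : Fin n → C, ERelP P C n hn x y → Function.Injective x ∧ Function.Injective y) ∧
    (∀ (x y : Fin n → C) (σ τ : Equiv.Perm (Fin n)),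
        ERelP P C n hn x y → ERelP P C n hn (x ∘ σ) (y ∘ τ)) ∧
    (∀ x : Fin n → C, Function.Injective x → ERelP P C n hn x x) ∧
    (∀ x y : Fin n → C, ERelP P C n hn x y → ERelP P C n hn y x) ∧
    (∀ x y z : Fin n → C, ERelP P C n hn x y → ERelP P C n hn y z → ERelP P C n hn x z)) ∧
  (∀ (n : ℕ) (hn : n ∈ P) (hn0 : 0 < n),
    (∀ x y : Fin n → C, LTRelP P C n hn x y → Function.Injective x ∧ Function.Injective y) ∧
    (∀ x x' y y' : Fin n → C, ERelP P C n hn0 x x' → ERelP P C n hn0 y y' →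
        LTRelP P C n hn x y → LTRelP P C n hn x' y') ∧
    (∀ x y : Fin n → C, LTRelP P C n hn x y → ¬ ERelP P C n hn0 x y) ∧
    (∀ x y z : Fin n → C, LTRelP P C n hn x y → LTRelP P C n hn y z → LTRelP P C n hn x z) ∧
    (∀ x y : Fin n → C, Function.Injective x → Function.Injective y →
        ¬ ERelP P C n hn0 x y → LTRelP P C n hn x y ∨ LTRelP P C n hn y x))

/-- The class `K_P` of finite `L_P`-structures as above. -/
def KP (P : Set ℕ) : Set (Bundled (LP P).Structure) := {C | Finite C ∧ IsKPStruct P C}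

/-- The expansion of an `L_P`-structure by the binary relation `r`. -/
def expStrP (P : Set ℕ) (M : Type*) [(LP P).Structure M] (r : M → M → Prop) :
    ((LP P).sum Lord).Structure M :=
  @Language.sumStructure (LP P) Lord M _ (ordStructure M r)

/-!
Let `B` be the ordered four-point structure `0 < 1 < 2 < 3` in which `E₂` identifies
complementary pairs, and `A` the ordered three-point structure with trivial `E₂`. Every
permutation is an automorphism of their `L_P`-reducts, which lie in `K_P`, so `A` and `B` embed
in `(M, <)` for every linear order `<`. Fix a well-order of the `E₂`-classes of `M` and colour a
copy `a < b < c` of `A` by whether the class of `{a, b}` precedes the class of `{b, c}`. In a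
copy `w₀ < w₁ < w₂ < w₃` of `B` the copies `{w₀, w₁, w₂}` and `{w₁, w₂, w₃}` compare the same
two distinct classes `[w₀w₁] = [w₂w₃]` and `[w₁w₂]` in opposite directions, so they get
different colours and no copy of `B` is monochromatic.
-/

theorem Fin.comp_append {α β : Type*} {m n : ℕ} (g : α → β) (x : Fin m → α) (y : Fin n → α) :
    g ∘ Fin.append x y = Fin.append (g ∘ x) (g ∘ y) := by
  funext i
  refine Fin.addCases (fun j => ?_) (fun j => ?_) i <;> simp

namespace KPNoRamseyOrder

open Set

variable {P : Set ℕ}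

section Transfer

variable {N M : Type*} [(LP P).Structure N] [(LP P).Structure M]

theorem erelP_comp_iff (f : N ↪[LP P] M) {n : ℕ} (hn : 0 < n) (x y : Fin n → N) :
    ERelP P M n hn (f ∘ x) (f ∘ y) ↔ ERelP P N n hn x y := by
  unfold ERelP
  rw [← Fin.comp_append]
  exact f.map_rel _ _

def withOrder (f : N ↪[LP P] M) {s : N → N → Prop} {r : M → M → Prop}
    (hf : ∀ a b, r (f a) (f b) ↔ s a b) :
    @Embedding ((LP P).sum Lord) N M (expStrP P N s) (expStrP P M r) :=
  letI := expStrP P N s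
  letI := expStrP P M r
  { toEmbedding := f.toEmbedding
    map_fun' := fun {_} F => by rcases F with F | F <;> exact F.elim
    map_rel' := by
      rintro _ (R | R) x
      · exact f.map_rel R x
      · obtain ⟨rfl⟩ : PLift _ := R
        exact hf _ _ }

variable {s : N → N → Prop} {r : M → M → Prop}

def forgetOrder (f : @Embedding ((LP P).sum Lord) N M (expStrP P N s) (expStrP P M r)) :
    N ↪[LP P] M :=
  letI := expStrP P N s
  letI := expStrP P M r
  { toEmbedding := f.toEmbedding
    map_fun' := fun {_} F => F.elim
    map_rel' := fun R x => f.map_rel (Sum.inl R) x }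

theorem rel_iff_of_embedding
    (f : @Embedding ((LP P).sum Lord) N M (expStrP P N s) (expStrP P M r)) (a b : N) :
    r (f a) (f b) ↔ s a b :=
  letI := expStrP P N s
  letI := expStrP P M r
  f.map_rel (Sum.inr ⟨rfl⟩) ![a, b]

end Transfer

section PairStructure

/-- On at most four points two distinct pairs are disjoint iff they are complementary; phrasing
the relation with disjointness makes every injection preserve it. -/
def PairRel {α : Type*} {n : ℕ} (x y : Fin n → α) : Prop :=
  Function.Injective x ∧ Function.Injective y ∧
    (n = 2 → range x = range y ∨ Disjoint (range x) (range y))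

theorem PairRel.comp_iff {α β : Type*} {n : ℕ} {ι : α → β} (hι : Function.Injective ι)
    {x y : Fin n → α} : PairRel (ι ∘ x) (ι ∘ y) ↔ PairRel x y := by
  simp only [PairRel, hι.of_comp_iff, range_comp, image_eq_image hι, disjoint_image_iff hι]

theorem PairRel.comp_perm {α : Type*} {n : ℕ} {x y : Fin n → α} (h : PairRel x y)
    (σ τ : Equiv.Perm (Fin n)) : PairRel (x ∘ σ) (y ∘ τ) := by
  obtain ⟨hx, hy, h2⟩ := h
  refine ⟨hx.comp σ.injective, hy.comp τ.injective, ?_⟩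
  simpa only [EquivLike.range_comp] using h2

theorem PairRel.refl {α : Type*} {n : ℕ} {x : Fin n → α} (hx : Function.Injective x) :
    PairRel x x :=
  ⟨hx, hx, fun _ => Or.inl rfl⟩

theorem PairRel.symm {α : Type*} {n : ℕ} {x y : Fin n → α} (h : PairRel x y) : PairRel y x :=
  ⟨h.2.1, h.1, fun hn => (h.2.2 hn).imp Eq.symm fun h => h.symm⟩

theorem PairRel.trans {m n : ℕ} (hm : m ≤ 4) {x y z : Fin n → Fin m} (hxy : PairRel x y)
    (hyz : PairRel y z) : PairRel x z := by
  obtain ⟨hx, hy, hxy⟩ := hxy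
  obtain ⟨-, hz, hyz⟩ := hyz
  refine ⟨hx, hz, fun hn => ?_⟩
  subst hn
  have fills {u : Fin 2 → Fin m} (hu : Function.Injective u)
      (hd : Disjoint (range u) (range y)) : range u = (range y)ᶜ := by
    refine eq_of_subset_of_ncard_le hd.subset_compl_right ?_
    rw [ncard_compl, ncard_range_of_injective hu, ncard_range_of_injective hy]
    simp only [Nat.card_eq_fintype_card, Fintype.card_fin]
    omega
  rcases hxy rfl with h | h <;> rcases hyz rfl with h' | h'
  · exact Or.inl (h.trans h')
  · exact Or.inr (h ▸ h')
  · exact Or.inr (h' ▸ h)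
  · exact Or.inl ((fills hx h).trans (fills hz h'.symm).symm)

instance pairStructure (m : ℕ) : (LP P).Structure (Fin m) where
  funMap F := F.elim
  RelMap {_} R v := match R with
    | Sum.inl s => PairRel (v ∘ Fin.cast s.2.2.symm ∘ Fin.castAdd s.1)
        (v ∘ Fin.cast s.2.2.symm ∘ Fin.natAdd s.1)
    | Sum.inr _ => False

variable {m : ℕ}

theorem erelP_fin_iff {n : ℕ} (hn : 0 < n) (x y : Fin n → Fin m) :
    ERelP P (Fin m) n hn x y ↔ PairRel x y := by
  change PairRel (Fin.append x y ∘ Fin.cast rfl ∘ Fin.castAdd n)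
    (Fin.append x y ∘ Fin.cast rfl ∘ Fin.natAdd n) ↔ _
  congr! 2 <;> funext i
  exacts [Fin.append_left x y i, Fin.append_right x y i]

theorem not_ltRelP_fin {n : ℕ} (hn : n ∈ P) (x y : Fin n → Fin m) :
    ¬ LTRelP P (Fin m) n hn x y :=
  id

theorem isKPStruct_fin (hP : ∀ n ∈ P, 3 ≤ n) (hm : m ≤ 4) : IsKPStruct P (Fin m) := by
  simp only [IsKPStruct, erelP_fin_iff]
  refine ⟨fun n hn => ⟨fun x y h => ⟨h.1, h.2.1⟩, fun x y σ τ h => h.comp_perm σ τ,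
    fun x hx => .refl hx, fun x y h => h.symm, fun x y z => .trans hm⟩,
    fun n hn _ => ⟨fun x y h => (not_ltRelP_fin hn x y h).elim,
      fun _ _ x y _ _ h => (not_ltRelP_fin hn x y h).elim,
      fun x y h => (not_ltRelP_fin hn x y h).elim,
      fun x y _ h => (not_ltRelP_fin hn x y h).elim,
      fun x y hx hy hne => (hne ⟨hx, hy, fun h2 => by linarith [hP n hn]⟩).elim⟩⟩

def finEmbedding {k : ℕ} (ι : Fin m ↪ Fin k) : Fin m ↪[LP P] Fin k where
  toEmbedding := ι
  map_fun' := fun {_} F => F.elim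
  map_rel' := by
    rintro _ (R | R) x
    · exact PairRel.comp_iff ι.injective
    · exact Iff.rfl

instance orderedPairStructure (m : ℕ) : ((LP P).sum Lord).Structure (Fin m) :=
  expStrP P (Fin m) (· < ·)

variable (P m) in
abbrev orderedFin : Bundled ((LP P).sum Lord).Structure := ⟨Fin m, inferInstance⟩

def orderedFinEmbedding {k : ℕ} (ι : Fin m ↪o Fin k) : Fin m ↪[(LP P).sum Lord] Fin k :=
  withOrder (finEmbedding ι.toEmbedding) fun _ _ => ι.lt_iff_lt

end PairStructure

section Age

variable {M : Type*} [(LP P).Structure M]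

theorem exists_isKPStruct_substructure (hage : (LP P).age M ⊆ KP P) {s : Set M}
    (hs : s.Finite) : ∃ S : (LP P).Substructure M, s ⊆ S ∧ IsKPStruct P S := by
  let S := Substructure.closure (LP P) s
  have hS : (⟨S, inferInstance⟩ : Bundled (LP P).Structure) ∈ (LP P).age M :=
    ⟨(Substructure.fg_iff_structure_fg S).1 (Substructure.fg_closure hs), ⟨S.subtype⟩⟩
  exact ⟨S, Substructure.subset_closure, (hage hS).2⟩

theorem erelP_symm_of_age (hage : (LP P).age M ⊆ KP P) {n : ℕ} (hn : 0 < n)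
    {x y : Fin n → M} (h : ERelP P M n hn x y) : ERelP P M n hn y x := by
  obtain ⟨S, hS, hKP⟩ := exists_isKPStruct_substructure hage
    ((finite_range x).union (finite_range y))
  let x' : Fin n → S := fun i => ⟨x i, hS (.inl ⟨i, rfl⟩)⟩
  let y' : Fin n → S := fun i => ⟨y i, hS (.inr ⟨i, rfl⟩)⟩
  replace h := (erelP_comp_iff S.subtype hn x' y').1 h
  exact (erelP_comp_iff S.subtype hn y' x').2 ((hKP.1 n hn).2.2.2.1 x' y' h)

theorem erelP_trans_of_age (hage : (LP P).age M ⊆ KP P) {n : ℕ} (hn : 0 < n)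
    {x y z : Fin n → M} (hxy : ERelP P M n hn x y) (hyz : ERelP P M n hn y z) :
    ERelP P M n hn x z := by
  obtain ⟨S, hS, hKP⟩ := exists_isKPStruct_substructure hage
    (((finite_range x).union (finite_range y)).union (finite_range z))
  let x' : Fin n → S := fun i => ⟨x i, hS (.inl (.inl ⟨i, rfl⟩))⟩
  let y' : Fin n → S := fun i => ⟨y i, hS (.inl (.inr ⟨i, rfl⟩))⟩
  let z' : Fin n → S := fun i => ⟨z i, hS (.inr ⟨i, rfl⟩)⟩
  replace hxy := (erelP_comp_iff S.subtype hn x' y').1 hxy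
  replace hyz := (erelP_comp_iff S.subtype hn y' z').1 hyz
  exact (erelP_comp_iff S.subtype hn x' z').2 ((hKP.1 n hn).2.2.2.2 x' y' z' hxy hyz)

variable (P) in
def eClass {n : ℕ} (hn : 0 < n) (x : Fin n → M) : Set (Fin n → M) :=
  {z | ERelP P M n hn z x}

theorem eClass_eq_of_erelP (hage : (LP P).age M ⊆ KP P) {n : ℕ} (hn : 0 < n)
    {x y : Fin n → M} (h : ERelP P M n hn x y) : eClass P hn x = eClass P hn y := by
  ext z
  exact ⟨fun hz => erelP_trans_of_age hage hn hz h,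
    fun hz => erelP_trans_of_age hage hn hz (erelP_symm_of_age hage hn h)⟩

end Age

theorem eq_of_range_eq_of_rel_iff_lt {M : Type*} (r : M → M → Prop) [IsStrictTotalOrder M r]
    {m : ℕ} {f g : Fin m → M}
    (hf : ∀ i j, r (f i) (f j) ↔ i < j) (hg : ∀ i j, r (g i) (g j) ↔ i < j)
    (h : range f = range g) : f = g := by
  classical
  let := linearOrderOfSTO r
  exact (StrictMono.range_inj (fun i j => (hf i j).2) (fun i j => (hg i j).2)).1 h

theorem orderedFin_mem_age {M : Type} [(LP P).Structure M] (r : M → M → Prop)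
    [IsStrictTotalOrder M r] (hage : KP P ⊆ (LP P).age M) (hP : ∀ n ∈ P, 3 ≤ n) {m : ℕ}
    (hm : m ≤ 4) : orderedFin P m ∈ @Language.age _ M (expStrP P M r) := by
  classical
  have hKP : (⟨Fin m, inferInstance⟩ : Bundled (LP P).Structure) ∈ KP P :=
    ⟨inferInstance, isKPStruct_fin hP hm⟩
  obtain ⟨-, ⟨f⟩⟩ := hage hKP
  let := linearOrderOfSTO r
  let π := Tuple.sort f
  have hmono : StrictMono (f ∘ π) :=
    (Tuple.monotone_sort f).strictMono_of_injective (f.injective.comp π.injective)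
  exact ⟨Structure.FG.of_finite,
    ⟨withOrder (f.comp (finEmbedding π.toEmbedding)) fun _ _ => hmono.lt_iff_lt⟩⟩

section Colouring

variable {M : Type*} [(LP P).Structure M]

variable (P) in
open scoped Classical in
noncomputable def tripleColour (θ : Fin 3 → M) : Fin 2 :=
  if WellOrderingRel (eClass P two_pos ![θ 0, θ 1]) (eClass P two_pos ![θ 1, θ 2]) then 0 else 1

theorem tripleColour_castSucc_ne_succ (hage : (LP P).age M ⊆ KP P) (Φ : Fin 4 ↪[LP P] M) :
    tripleColour P (Φ ∘ Fin.castSucc) ≠ tripleColour P (Φ ∘ Fin.succ) := by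
  have hΦ (a b c d : Fin 4) :
      ERelP P M 2 two_pos ![Φ a, Φ b] ![Φ c, Φ d] ↔ PairRel ![a, b] ![c, d] := by
    have hcomp (i j : Fin 4) : ![Φ i, Φ j] = Φ ∘ ![i, j] := by
      ext k
      fin_cases k <;> rfl
    rw [hcomp, hcomp, erelP_comp_iff, erelP_fin_iff]
  let c (i j : Fin 4) : Set (Fin 2 → M) := eClass P two_pos ![Φ i, Φ j]
  have h23 : c 2 3 = c 0 1 := eClass_eq_of_erelP hage two_pos
    ((hΦ 2 3 0 1).2 ⟨by decide, by decide, fun _ => .inr (by simp)⟩)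
  have h01 : c 0 1 ≠ c 1 2 := by
    intro h
    have hmem : ![Φ 0, Φ 1] ∈ c 0 1 := (hΦ 0 1 0 1).2 (.refl (by decide))
    obtain ⟨-, -, h'⟩ := (hΦ 0 1 1 2).1 (show ![Φ 0, Φ 1] ∈ c 1 2 from h ▸ hmem)
    rcases h' rfl with h' | h'
    · exact absurd (congrArg ((0 : Fin 4) ∈ ·) h') (by simp)
    · exact Set.disjoint_left.1 h' (by simp : (1 : Fin 4) ∈ range ![0, 1]) (by simp)
  classical
  unfold tripleColour
  change (if WellOrderingRel (c 0 1) (c 1 2) then _ else _) ≠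
    (if WellOrderingRel (c 1 2) (c 2 3) then _ else _)
  rw [h23]
  rcases trichotomous_of WellOrderingRel (c 0 1) (c 1 2) with h | h | h
  · simp [h, asymm h]
  · exact absurd h h01
  · simp [h, asymm h]

end Colouring

section Copies

variable {M : Type} [(LP P).Structure M] {C : Type} [((LP P).sum Lord).Structure C]

variable (P) in
/-- `orderedFin P 3` is rigid, so the chosen isomorphism is the only one (`copyColour_range`). -/
noncomputable def copyColour (e : C → M)
    (S : {S : ((LP P).sum Lord).Substructure C //
      Nonempty (S ≃[(LP P).sum Lord] orderedFin P 3)}) : Fin 2 :=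
  tripleColour P fun i => e ((Classical.choice S.2).symm i)

theorem copyColour_range (r : M → M → Prop) [IsStrictTotalOrder M r]
    (eC : @Embedding _ C M _ (expStrP P M r)) (θ : orderedFin P 3 ↪[(LP P).sum Lord] C) :
    copyColour P eC ⟨θ.toHom.range, ⟨θ.equivRange.symm⟩⟩ = tripleColour P (eC ∘ θ) := by
  let := expStrP P M r
  let e := Classical.choice (⟨θ.equivRange.symm⟩ : Nonempty (θ.toHom.range ≃[_] orderedFin P 3))
  refine congrArg (tripleColour P) (eq_of_range_eq_of_rel_iff_lt r
    (rel_iff_of_embedding (eC.comp (θ.toHom.range.subtype.comp e.symm.toEmbedding)))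
    (rel_iff_of_embedding (eC.comp θ)) ?_)
  have he : range (fun i => (e.symm i : C)) = range θ := by
    change range (Subtype.val ∘ e.symm) = _
    rw [EquivLike.range_comp, Subtype.range_coe]
    exact Hom.range_coe θ.toHom
  rw [range_comp eC θ, ← he, ← range_comp]
  rfl

end Copies

end KPNoRamseyOrder

open KPNoRamseyOrder in
theorem KP_limit_no_Ramsey_order_general (P : Set ℕ) (hP : ∀ n ∈ P, 3 ≤ n)
    (M : Type) [(LP P).Structure M]
    (hage : (LP P).age M = KP P) :
    ¬ ∃ r : M → M → Prop, IsStrictTotalOrder M r ∧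
        @Language.IsUltrahomogeneous ((LP P).sum Lord) M (expStrP P M r) ∧
        RamseyProperty (@Language.age ((LP P).sum Lord) M (expStrP P M r)) := by
  rintro ⟨r, hr, -, hRamsey⟩
  let := expStrP P M r
  obtain ⟨C, hC, hχ⟩ := hRamsey (orderedFin P 3) (orderedFin P 4)
    (orderedFin_mem_age r hage.ge hP (by norm_num)) (orderedFin_mem_age r hage.ge hP le_rfl)
    2 two_pos
  obtain ⟨eC⟩ := hC.2
  obtain ⟨B', ⟨ψ⟩, hmono⟩ := hχ (copyColour P eC)
  let ι : orderedFin P 4 ↪[(LP P).sum Lord] C := B'.subtype.comp ψ.symm.toEmbedding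
  let θ (κ : Fin 3 ↪o Fin 4) := ι.comp (orderedFinEmbedding κ)
  have hθ (κ : Fin 3 ↪o Fin 4) : (θ κ).toHom.range ≤ B' := by
    rintro _ ⟨a, rfl⟩
    exact (ψ.symm _).2
  have h := hmono ⟨_, ⟨(θ Fin.castSuccOrderEmb).equivRange.symm⟩⟩
    ⟨_, ⟨(θ (Fin.succOrderEmb 3)).equivRange.symm⟩⟩ (hθ _) (hθ _)
  exact tripleColour_castSucc_ne_succ hage.le (forgetOrder (eC.comp ι))
    ((copyColour_range r eC _).symm.trans (h.trans (copyColour_range r eC _)))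

/-- if `P ≠ ∅` then there is no strict linear order `<` on the Fraïssé
limit `M` of `K_P` such that `(M, <)` is ultrahomogeneous and the age of `(M, <)` has the
Ramsey property. -/
theorem KP_limit_no_Ramsey_order (P : Set ℕ) (hP : ∀ n ∈ P, 3 ≤ n) (hPne : P.Nonempty)
    (M : Type) [(LP P).Structure M] [Countable M]
    (hUH : (LP P).IsUltrahomogeneous M) (hage : (LP P).age M = KP P) :
    ¬ ∃ r : M → M → Prop, IsStrictTotalOrder M r ∧
        @Language.IsUltrahomogeneous ((LP P).sum Lord) M (expStrP P M r) ∧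
        RamseyProperty (@Language.age ((LP P).sum Lord) M (expStrP P M r)) :=
  KP_limit_no_Ramsey_order_general P hP M hage
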